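/- arXiv:1705.07808 — 3 statements merged into one kernel-verified Lean document; each statement's English description precedes it below -/
import Mathlib

section
/- Suppose X and Y are complex-valued random variables with |X| ≤ 1 and |Y| ≤ 1 almost surely, and let Ẋ = X - E[X], Ẏ = Y - E[Y]. Then Var(ẊẎ) ≤ 4 σ_X σ_Y. -/
/-!
The variance of `Ẋ * Ẏ` is at most its second moment. As `‖Ẋ‖, ‖Ẏ‖ ≤ 2`, pointwise
`‖Ẋ * Ẏ‖ ^ 2 ≤ 4 * ‖Ẋ‖ * ‖Ẏ‖`, and Cauchy–Schwarz bounds `E[‖Ẋ‖ * ‖Ẏ‖]` by `σ_X * σ_Y`.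
-/

open MeasureTheory

section Moments

variable {Ω : Type*} [MeasurableSpace Ω] {μ : Measure Ω}

theorem integral_norm_mul_norm_le_sqrt_mul_sqrt {F G : Type*} [NormedAddCommGroup F]
    [NormedAddCommGroup G] {f : Ω → F} {g : Ω → G} (hf : MemLp f 2 μ) (hg : MemLp g 2 μ) :
    ∫ ω, ‖f ω‖ * ‖g ω‖ ∂μ ≤ √(∫ ω, ‖f ω‖ ^ 2 ∂μ) * √(∫ ω, ‖g ω‖ ^ 2 ∂μ) := by
  have hf' : MemLp (fun ω => ‖f ω‖) (ENNReal.ofReal 2) μ := by simpa using hf.norm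
  have hg' : MemLp (fun ω => ‖g ω‖) (ENNReal.ofReal 2) μ := by simpa using hg.norm
  have h := integral_mul_norm_le_Lp_mul_Lq Real.HolderConjugate.two_two hf' hg'
  simp only [norm_norm, Real.rpow_two, ← Real.sqrt_eq_rpow] at h
  exact h

variable [IsProbabilityMeasure μ]

theorem ae_norm_sub_integral_le {E : Type*} [NormedAddCommGroup E] [NormedSpace ℝ E]
    {X : Ω → E} {C : ℝ} (hX : ∀ᵐ ω ∂μ, ‖X ω‖ ≤ C) :
    ∀ᵐ ω ∂μ, ‖X ω - ∫ ω', X ω' ∂μ‖ ≤ 2 * C := by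
  have hmean : ‖∫ ω, X ω ∂μ‖ ≤ C := by simpa using norm_integral_le_of_norm_le_const hX
  filter_upwards [hX] with ω hω
  linarith [norm_sub_le (X ω) (∫ ω', X ω' ∂μ)]

variable {E : Type*} [NormedAddCommGroup E] [InnerProductSpace ℝ E] [CompleteSpace E]

theorem integral_norm_sub_integral_sq {Z : Ω → E} (hZ : MemLp Z 2 μ) :
    ∫ ω, ‖Z ω - ∫ ω', Z ω' ∂μ‖ ^ 2 ∂μ = ∫ ω, ‖Z ω‖ ^ 2 ∂μ - ‖∫ ω, Z ω ∂μ‖ ^ 2 := by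
  set m := ∫ ω, Z ω ∂μ
  have hZ1 : Integrable Z μ := hZ.integrable one_le_two
  have hsq : Integrable (fun ω => ‖Z ω‖ ^ 2) μ := (memLp_two_iff_integrable_sq_norm hZ.1).1 hZ
  have hinner : Integrable (fun ω => 2 * inner ℝ (Z ω) m) μ := (hZ1.inner_const m).const_mul 2
  have hmean : ∫ ω, inner ℝ (Z ω) m ∂μ = ‖m‖ ^ 2 := by
    simp_rw [real_inner_comm m]
    rw [integral_inner hZ1, real_inner_self_eq_norm_sq]
  have hsub : Integrable (fun ω => ‖Z ω‖ ^ 2 - 2 * inner ℝ (Z ω) m) μ := hsq.sub hinner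
  simp_rw [norm_sub_sq_real]
  rw [integral_add hsub (integrable_const _), integral_sub hsq hinner,
    integral_const_mul, hmean, integral_const]
  simp only [probReal_univ, one_smul]
  ring

theorem integral_norm_sub_integral_sq_le {Z : Ω → E} (hZ : MemLp Z 2 μ) :
    ∫ ω, ‖Z ω - ∫ ω', Z ω' ∂μ‖ ^ 2 ∂μ ≤ ∫ ω, ‖Z ω‖ ^ 2 ∂μ := by
  rw [integral_norm_sub_integral_sq hZ]
  linarith [sq_nonneg ‖∫ ω, Z ω ∂μ‖]

end Moments

theorem norm_mul_sq_le_mul_norm_mul_norm {R : Type*} [SeminormedRing R] {a b : R} {s t : ℝ}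
    (ha : ‖a‖ ≤ s) (hb : ‖b‖ ≤ t) : ‖a * b‖ ^ 2 ≤ s * t * (‖a‖ * ‖b‖) := by
  have hab : ‖a * b‖ ≤ ‖a‖ * ‖b‖ := norm_mul_le a b
  calc ‖a * b‖ ^ 2 ≤ (‖a‖ * ‖b‖) * (‖a‖ * ‖b‖) := by nlinarith [norm_nonneg (a * b)]
    _ ≤ s * t * (‖a‖ * ‖b‖) :=
      mul_le_mul_of_nonneg_right (mul_le_mul ha hb (norm_nonneg b) ((norm_nonneg a).trans ha))
        (by positivity)

/-- For complex random variables bounded by 1 a.s., with `Ẋ = X - E[X]` and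
`Ẏ = Y - E[Y]`, one has `Var(ẊẎ) ≤ 4 σ_X σ_Y`. -/
theorem stmt_4 {Ω : Type*} [MeasureSpace Ω] [IsProbabilityMeasure (volume : Measure Ω)]
    (X Y : Ω → ℂ)
    (hXmeas : AEMeasurable X) (hYmeas : AEMeasurable Y)
    (hXbd : ∀ᵐ ω, ‖X ω‖ ≤ 1) (hYbd : ∀ᵐ ω, ‖Y ω‖ ≤ 1) :
    (∫ ω, ‖(X ω - ∫ ω', X ω') * (Y ω - ∫ ω', Y ω')
        - ∫ ω'', (X ω'' - ∫ ω', X ω') * (Y ω'' - ∫ ω', Y ω')‖ ^ 2) ≤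
      4 * Real.sqrt (∫ ω, ‖X ω - ∫ ω', X ω'‖ ^ 2) *
        Real.sqrt (∫ ω, ‖Y ω - ∫ ω', Y ω'‖ ^ 2) := by
  set Xc := fun ω => X ω - ∫ ω', X ω'
  set Yc := fun ω => Y ω - ∫ ω', Y ω'
  have hXc : ∀ᵐ ω, ‖Xc ω‖ ≤ 2 := by simpa using ae_norm_sub_integral_le hXbd
  have hYc : ∀ᵐ ω, ‖Yc ω‖ ≤ 2 := by simpa using ae_norm_sub_integral_le hYbd
  have hXc2 : MemLp Xc 2 := MemLp.of_bound (hXmeas.sub_const _).aestronglyMeasurable 2 hXc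
  have hYc2 : MemLp Yc 2 := MemLp.of_bound (hYmeas.sub_const _).aestronglyMeasurable 2 hYc
  have hXYc_sq : ∀ᵐ ω, ‖Xc ω * Yc ω‖ ^ 2 ≤ 2 * 2 * (‖Xc ω‖ * ‖Yc ω‖) := by
    filter_upwards [hXc, hYc] with ω hx hy
    exact norm_mul_sq_le_mul_norm_mul_norm hx hy
  have hXYc2 : MemLp (fun ω => Xc ω * Yc ω) 2 :=
    MemLp.of_bound (hXc2.1.mul hYc2.1) (2 * 2) (by
      filter_upwards [hXc, hYc] with ω hx hy
      exact norm_mul_le_of_le hx hy)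
  calc _ ≤ ∫ ω, ‖Xc ω * Yc ω‖ ^ 2 := integral_norm_sub_integral_sq_le hXYc2
    _ ≤ ∫ ω, 2 * 2 * (‖Xc ω‖ * ‖Yc ω‖) :=
      integral_mono_ae ((memLp_two_iff_integrable_sq_norm hXYc2.1).1 hXYc2)
        ((hXc2.norm.integrable_mul hYc2.norm).const_mul _) hXYc_sq
    _ = 2 * 2 * ∫ ω, ‖Xc ω‖ * ‖Yc ω‖ := integral_const_mul _ _
    _ ≤ 2 * 2 * (√(∫ ω, ‖Xc ω‖ ^ 2) * √(∫ ω, ‖Yc ω‖ ^ 2)) :=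
      mul_le_mul_of_nonneg_left (integral_norm_mul_norm_le_sqrt_mul_sqrt hXc2 hYc2) (by norm_num)
    _ = _ := by ring
end

section
/- Let f ≥ 3, let w = (0, w₁, …, w_{f-1}) ∈ ℤ^f with w₀ = 0, and let a = (a₀, …, a_{f-1}) ∈ ℝ^f with all aᵢ ≥ 0. Suppose a·w > 0, and that w₁ is maximal among w₁,…,w_{f-1}. Define a' = (a₀', a₁', 0, …, 0) with a₁' = (a·w)/w₁ and a₀' = -a₁' + a₀ + a₁ + ⋯ + a_{f-1}. Then: (1) a' - a is orthogonal to both the all-ones vector 1 and to w; (2) a₀' ≥ a₀; (3) a₁' > 0; and (4) every entry of a + t(a' - a) is non-negative for all t ∈ [0,1]. -/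
/-!
Since `w₀ = 0` and `w₁` dominates every other `wⱼ`, nonnegativity of `a` gives
`a·w ≤ (a₁ + ⋯ + a_{f-1}) w₁`. As `a·w > 0` this forces `w₁ > 0`, and dividing by `w₁` gives
`a₁' ≤ a₁ + ⋯ + a_{f-1}`, i.e. `a₀' ≥ a₀`. So `a'` is entrywise nonnegative, and every point of
the segment from `a` to `a'` is a convex combination of two nonnegative vectors.
-/

open Finset

variable {ι : Type*} [Fintype ι] [DecidableEq ι]

theorem sum_mul_le_sum_erase_mul {a w : ι → ℝ} {i₀ i₁ : ι} (ha : ∀ i, 0 ≤ a i)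
    (hw₀ : w i₀ = 0) (hmax : ∀ j, j ≠ i₀ → w j ≤ w i₁) :
    ∑ i, a i * w i ≤ (∑ i ∈ univ.erase i₀, a i) * w i₁ := by
  rw [← sum_erase univ (f := fun i => a i * w i) (a := i₀) (by simp [hw₀]), sum_mul]
  exact sum_le_sum fun j hj => mul_le_mul_of_nonneg_left (hmax j (ne_of_mem_erase hj)) (ha j)

/-- The vector `a'` of the paper, with the indices `0, 1` generalized to `i₀ ≠ i₁`. -/
noncomputable def shrinkToPair (a w : ι → ℝ) (i₀ i₁ : ι) : ι → ℝ := fun i =>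
  if i = i₀ then -((∑ i, a i * w i) / w i₁) + ∑ i, a i
  else if i = i₁ then (∑ i, a i * w i) / w i₁ else 0

namespace shrinkToPair

variable (a w : ι → ℝ) {i₀ i₁ : ι}

theorem apply_left : shrinkToPair a w i₀ i₁ i₀ = -((∑ i, a i * w i) / w i₁) + ∑ i, a i := by
  simp [shrinkToPair]

theorem apply_right (h : i₀ ≠ i₁) : shrinkToPair a w i₀ i₁ i₁ = (∑ i, a i * w i) / w i₁ := by
  simp [shrinkToPair, h.symm]

theorem apply_of_ne {i : ι} (h₀ : i ≠ i₀) (h₁ : i ≠ i₁) : shrinkToPair a w i₀ i₁ i = 0 := by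
  simp [shrinkToPair, h₀, h₁]

theorem sum_sub_eq_zero (h : i₀ ≠ i₁) : ∑ i, (shrinkToPair a w i₀ i₁ i - a i) = 0 := by
  rw [sum_sub_distrib, Fintype.sum_eq_add i₀ i₁ h fun i hi => apply_of_ne a w hi.1 hi.2,
    apply_left, apply_right a w h]
  ring

theorem sum_sub_mul_eq_zero (h : i₀ ≠ i₁) (hw₀ : w i₀ = 0) (hw₁ : w i₁ ≠ 0) :
    ∑ i, (shrinkToPair a w i₀ i₁ i - a i) * w i = 0 := by
  simp_rw [sub_mul]
  rw [sum_sub_distrib, Fintype.sum_eq_add i₀ i₁ h fun i hi => by simp [apply_of_ne a w hi.1 hi.2],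
    apply_right a w h, hw₀, div_mul_cancel₀ _ hw₁]
  ring

variable {a w}

theorem weight_pos (ha : ∀ i, 0 ≤ a i) (hw₀ : w i₀ = 0)
    (hmax : ∀ j, j ≠ i₀ → w j ≤ w i₁) (hdot : 0 < ∑ i, a i * w i) :
    0 < w i₁ :=
  pos_of_mul_pos_right (hdot.trans_le (sum_mul_le_sum_erase_mul ha hw₀ hmax))
    (sum_nonneg fun i _ => ha i)

theorem le_apply_left (ha : ∀ i, 0 ≤ a i) (hw₀ : w i₀ = 0)
    (hmax : ∀ j, j ≠ i₀ → w j ≤ w i₁) (hdot : 0 < ∑ i, a i * w i) :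
    a i₀ ≤ shrinkToPair a w i₀ i₁ i₀ := by
  have hle := sum_mul_le_sum_erase_mul ha hw₀ hmax
  rw [sum_erase_eq_sub (mem_univ i₀)] at hle
  have := (div_le_iff₀ (weight_pos ha hw₀ hmax hdot)).mpr hle
  rw [apply_left]
  linarith

theorem apply_right_pos (ha : ∀ i, 0 ≤ a i) (hw₀ : w i₀ = 0)
    (hmax : ∀ j, j ≠ i₀ → w j ≤ w i₁) (hdot : 0 < ∑ i, a i * w i)
    (h : i₀ ≠ i₁) : 0 < shrinkToPair a w i₀ i₁ i₁ := by
  rw [apply_right a w h]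
  exact div_pos hdot (weight_pos ha hw₀ hmax hdot)

theorem nonneg (ha : ∀ i, 0 ≤ a i) (hw₀ : w i₀ = 0)
    (hmax : ∀ j, j ≠ i₀ → w j ≤ w i₁) (hdot : 0 < ∑ i, a i * w i)
    (h : i₀ ≠ i₁) (i : ι) : 0 ≤ shrinkToPair a w i₀ i₁ i := by
  by_cases h₀ : i = i₀
  · subst h₀
    exact (ha i).trans (le_apply_left ha hw₀ hmax hdot)
  by_cases h₁ : i = i₁
  · subst h₁
    exact (apply_right_pos ha hw₀ hmax hdot h).le
  exact (apply_of_ne a w h₀ h₁).ge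

theorem segment_nonneg (ha : ∀ i, 0 ≤ a i) (hw₀ : w i₀ = 0)
    (hmax : ∀ j, j ≠ i₀ → w j ≤ w i₁) (hdot : 0 < ∑ i, a i * w i)
    (h : i₀ ≠ i₁) {t : ℝ} (ht : t ∈ Set.Icc (0 : ℝ) 1) (i : ι) :
    0 ≤ a i + t * (shrinkToPair a w i₀ i₁ i - a i) := by
  have hconvex : a i + t * (shrinkToPair a w i₀ i₁ i - a i)
      = (1 - t) * a i + t * shrinkToPair a w i₀ i₁ i := by ring
  rw [hconvex]
  exact add_nonneg (mul_nonneg (sub_nonneg.mpr ht.2) (ha i))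
    (mul_nonneg ht.1 (nonneg ha hw₀ hmax hdot h i))

end shrinkToPair

open shrinkToPair in
/-- Key linear-algebra step of the area-shrinking proposition (generic case
`a·w > 0`): with `w₀ = 0`, `a ≥ 0` entrywise, `a·w > 0`, and `w₁` maximal among
`w₁,…,w_{f-1}`, the vector `a' = (a₀', a₁', 0, …, 0)` with
`a₁' = (a·w)/w₁` and `a₀' = -a₁' + Σᵢ aᵢ` satisfies: `a' - a` is orthogonal to
the all-ones vector and to `w`, `a₀' ≥ a₀`, `a₁' > 0`, and every entry of
`a + t(a' - a)` is non-negative for `t ∈ [0,1]`. -/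
theorem stmt_8 (f : ℕ) [NeZero f] (hf : 3 ≤ f)
    (w : Fin f → ℤ) (a : Fin f → ℝ)
    (hw0 : w 0 = 0)
    (ha : ∀ i, 0 ≤ a i)
    (hdot : 0 < ∑ i, a i * (w i : ℝ))
    (hmax : ∀ j : Fin f, j ≠ 0 → w j ≤ w 1)
    (a' : Fin f → ℝ)
    (ha' : a' = fun i => if i = 0 then
        -((∑ i, a i * (w i : ℝ)) / (w 1 : ℝ)) + ∑ i, a i
      else if i = 1 then (∑ i, a i * (w i : ℝ)) / (w 1 : ℝ) else 0) :
    (∑ i, (a' i - a i)) = 0 ∧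
    (∑ i, (a' i - a i) * (w i : ℝ)) = 0 ∧
    a 0 ≤ a' 0 ∧
    0 < a' 1 ∧
    ∀ t ∈ Set.Icc (0 : ℝ) 1, ∀ i, 0 ≤ a i + t * (a' i - a i) := by
  obtain ⟨n, rfl⟩ : ∃ n, f = n + 2 := ⟨f - 2, by omega⟩
  change a' = shrinkToPair a (fun i => (w i : ℝ)) 0 1 at ha'
  subst ha'
  have hw₀ : (w 0 : ℝ) = 0 := by exact_mod_cast hw0
  have hmax' : ∀ j, j ≠ 0 → (w j : ℝ) ≤ w 1 := fun j hj => by exact_mod_cast hmax j hj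
  exact ⟨sum_sub_eq_zero a _ Fin.zero_ne_one,
    sum_sub_mul_eq_zero a _ Fin.zero_ne_one hw₀ (weight_pos ha hw₀ hmax' hdot).ne',
    le_apply_left ha hw₀ hmax' hdot, apply_right_pos ha hw₀ hmax' hdot Fin.zero_ne_one,
    fun t ht => segment_nonneg ha hw₀ hmax' hdot Fin.zero_ne_one ht⟩
end

section
/- Define W₁(a) = e^{-a/2}, W₂(a,b) = e^{-a-b/2}(1-a) for a,b ≥ 0. Define W₃(a,b) := e^{-(b+3a/2)}(1 - b - 3a/2) - ∫₀^{a/2} e^{-(a+b+t)/2} e^{-(a-2t)-(b+3t)/2}(1-a+2t) dt - 2∫₀^{a/2} e^{-(a+b+t)}(1-a-b-t) e^{-(a-2t)/2} dt. Then W₃(a,b) = e^{-(b+3a/2)}(1 - 3a + (3/2)a² - b(1-a)). -/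
/-- Plane-case evaluation of the three-fold circle Wilson loop:
`W₃(a,b) = e^{-(b+3a/2)}(1 - b - 3a/2)
  - ∫₀^{a/2} e^{-(a+b+t)/2} e^{-(a-2t)-(b+3t)/2}(1-a+2t) dt
  - 2∫₀^{a/2} e^{-(a+b+t)}(1-a-b-t) e^{-(a-2t)/2} dt
  = e^{-(b+3a/2)}(1 - 3a + (3/2)a² - b(1-a))`. -/
theorem stmt_15 (a b : ℝ) (ha : 0 ≤ a) (hb : 0 ≤ b) :
    Real.exp (-(b + 3 * a / 2)) * (1 - b - 3 * a / 2)
      - (∫ t in (0 : ℝ)..(a / 2),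
          Real.exp (-(a + b + t) / 2) *
            (Real.exp (-(a - 2 * t) - (b + 3 * t) / 2) * (1 - a + 2 * t)))
      - 2 * (∫ t in (0 : ℝ)..(a / 2),
          Real.exp (-(a + b + t)) * (1 - a - b - t) * Real.exp (-(a - 2 * t) / 2))
    = Real.exp (-(b + 3 * a / 2)) *
        (1 - 3 * a + (3 / 2) * a ^ 2 - b * (1 - a)) := by
  set E := Real.exp (-(b + 3 * a / 2)) with hE
  have hlin : (∫ t in (0 : ℝ)..(a / 2), t) = (a/2)^2 / 2 := by
    simp [integral_id]
  have h1 : (∫ t in (0 : ℝ)..(a / 2),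
      Real.exp (-(a + b + t) / 2) *
        (Real.exp (-(a - 2 * t) - (b + 3 * t) / 2) * (1 - a + 2 * t)))
      = E * ((1 - a) * (a/2) + (a/2)^2) := by
    have : ∀ t : ℝ, Real.exp (-(a + b + t) / 2) *
        (Real.exp (-(a - 2 * t) - (b + 3 * t) / 2) * (1 - a + 2 * t))
        = E * (1 - a) + E * 2 * t := by
      intro t
      rw [← mul_assoc, ← Real.exp_add,
        show -(a + b + t) / 2 + (-(a - 2 * t) - (b + 3 * t) / 2) = -(b + 3 * a / 2) by ring]
      ring
    rw [intervalIntegral.integral_congr (fun t _ => this t),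
      intervalIntegral.integral_add (intervalIntegrable_const)
        ((intervalIntegral.intervalIntegrable_id).const_mul _),
      intervalIntegral.integral_const, intervalIntegral.integral_const_mul, integral_id]
    simp
    ring
  have h2 : (∫ t in (0 : ℝ)..(a / 2),
      Real.exp (-(a + b + t)) * (1 - a - b - t) * Real.exp (-(a - 2 * t) / 2))
      = E * ((1 - a - b) * (a/2) - (a/2)^2 / 2) := by
    have : ∀ t : ℝ, Real.exp (-(a + b + t)) * (1 - a - b - t) * Real.exp (-(a - 2 * t) / 2)
        = E * (1 - a - b) + (-E) * t := by
      intro t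
      rw [mul_comm (Real.exp (-(a + b + t))) (1 - a - b - t), mul_assoc, ← Real.exp_add,
        show -(a + b + t) + -(a - 2 * t) / 2 = -(b + 3 * a / 2) by ring]
      ring
    rw [intervalIntegral.integral_congr (fun t _ => this t),
      intervalIntegral.integral_add (intervalIntegrable_const)
        ((intervalIntegral.intervalIntegrable_id).const_mul _),
      intervalIntegral.integral_const, intervalIntegral.integral_const_mul, integral_id]
    simp
    ring
  rw [h1, h2]; ring
end
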